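/- Let {a_n}_{n=0}^∞ be a Stieltjes moment sequence with representing measure μ such that 0 < θ3 := sup supp μ < ∞, and suppose μ((θ1,θ2)) = 0 for some real θ1, θ2 with 0 < θ1 < θ2 < θ3. Assume the set J := {κ ∈ ℕ : κ ≥ 2 and {a_n^{1/κ}}_{n=0}^∞ is a Stieltjes moment sequence} is nonempty, and for each κ ∈ J let ν_κ be a representing measure of {a_n^{1/κ}}_{n=0}^∞ and β(κ) = θ2^{1/κ}. If ι_s* = 1, where ι_s* = 1 + ⌊log(θ3/θ2)/log(θ2/θ1)⌋, then the following are equivalent: (i) θ2 ∈ supp μ; (ii) β(κ) ∈ supp ν_κ for some κ ∈ J; (iii) β(κ) ∈ supp ν_κ for every κ ∈ J. -/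

import Mathlib

/-!
Let `ν` represent `aₙ ^ (1/κ)`. The law of a product of `κ` independent `ν`-distributed variables
has moments `aₙ`; it and `μ` both live on a compact interval, so by Weierstrass approximation they
coincide, and `supp μ = (supp ν) ^ κ` (pointwise power). Hence `θ₂ ^ (1/κ) ∈ supp ν` gives
`θ₂ ∈ supp μ`. Conversely, write `θ₂ = x₁ ⋯ x_κ` with `xᵢ ∈ supp ν`, smallest factor `u` and
largest `v`, so `u ^ κ ≤ θ₂`. The products `u ^ (κ - j) * v ^ j` lie in `supp μ`, so they avoid the
gap `(θ₁, θ₂)`, and they grow geometrically with ratio `v / u ≤ θ₃ / θ₂` (from `θ₂ ≤ u v ^ (κ-1)`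
and `v ^ κ ≤ θ₃`). Since `ι_s* = 1` means `θ₃ / θ₂ < θ₂ / θ₁`, they cannot jump over the gap; as
they end at `v ^ κ ≥ θ₂`, they cannot start at `u ^ κ ≤ θ₁`, which forces `u ^ κ = θ₂`.
-/

open MeasureTheory

/-- The closed support of a Borel measure: the set of points all of whose open
neighbourhoods have positive measure. -/
def msupport {X : Type*} [TopologicalSpace X] [MeasurableSpace X] (μ : Measure X) : Set X :=
  {x | ∀ U : Set X, IsOpen U → x ∈ U → 0 < μ U}

/-- `μ` is a representing measure (on `[0,∞)`, modelled as a measure on `ℝ` vanishing on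
`(-∞,0)`) of the Stieltjes moment sequence `a`. -/
def IsRepMeas (a : ℕ → ℝ) (μ : Measure ℝ) : Prop :=
  (∀ n, 0 ≤ a n) ∧ μ (Set.Iio 0) = 0 ∧
    ∀ n : ℕ, ∫⁻ x, ENNReal.ofReal (x ^ n) ∂μ = ENNReal.ofReal (a n)

/-- `a` is a Stieltjes moment sequence. -/
def IsStieltjes (a : ℕ → ℝ) : Prop :=
  ∃ μ : Measure ℝ, IsRepMeas a μ

/-- A Stieltjes moment sequence is determinate if it has a unique representing measure. -/
def IsDeterminate (a : ℕ → ℝ) : Prop :=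
  ∀ μ ν : Measure ℝ, IsRepMeas a μ → IsRepMeas a ν → μ = ν

open Set Filter
open scoped Pointwise BoundedContinuousFunction

lemma msupport_eq_support {X : Type*} [TopologicalSpace X] [MeasurableSpace X] (μ : Measure X) :
    msupport μ = μ.support := by
  ext x
  simp only [msupport, Measure.support_eq_forall_isOpen, mem_ofPred_eq]
  exact forall_congr' fun U => Imp.swap

namespace MeasureTheory.Measure

lemma image_support_subset_support_map {X Y : Type*} [TopologicalSpace X] [MeasurableSpace X]
    [OpensMeasurableSpace X] [TopologicalSpace Y] [MeasurableSpace Y] [BorelSpace Y]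
    (μ : Measure X) {f : X → Y} (hf : Continuous f) :
    f '' μ.support ⊆ (μ.map f).support := by
  rintro _ ⟨x, hx, rfl⟩
  rw [support_eq_forall_isOpen] at hx ⊢
  intro U hxU hU
  rw [map_apply hf.measurable hU.measurableSet]
  exact hx _ hxU (hU.preimage hf)

lemma univ_pi_support_subset_support_pi {ι : Type*} [Fintype ι] {X : ι → Type*}
    [∀ i, TopologicalSpace (X i)] [∀ i, MeasurableSpace (X i)]
    (μ : ∀ i, Measure (X i)) [∀ i, SigmaFinite (μ i)] :
    univ.pi (fun i => (μ i).support) ⊆ (Measure.pi μ).support := by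
  intro x hx
  rw [support_eq_forall_isOpen]
  intro U hxU hU
  obtain ⟨u, hu, hsub⟩ := isOpen_pi_iff'.1 hU x hxU
  calc 0 < ∏ i, μ i (u i) := CanonicallyOrderedAdd.prod_pos.2 fun i _ =>
        (mem_support_iff_forall _).1 (hx i trivial) _ ((hu i).1.mem_nhds (hu i).2)
    _ = Measure.pi μ (univ.pi u) := (pi_pi μ u).symm
    _ ≤ Measure.pi μ U := measure_mono hsub

end MeasureTheory.Measure

open Measure

/-- The `κ`-th power of `ν` under multiplicative convolution `∗ₘ`. -/
noncomputable def mconvPow (ν : Measure ℝ) (κ : ℕ) : Measure ℝ :=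
  (Measure.pi fun _ : Fin κ => ν).map fun x => ∏ i, x i

instance (ν : Measure ℝ) [IsFiniteMeasure ν] (κ : ℕ) : IsFiniteMeasure (mconvPow ν κ) := by
  unfold mconvPow
  infer_instance

lemma integral_pow_mconvPow (ν : Measure ℝ) [SigmaFinite ν] (κ n : ℕ) :
    ∫ y, y ^ n ∂mconvPow ν κ = (∫ x, x ^ n ∂ν) ^ κ := by
  rw [mconvPow, integral_map (by fun_prop) (by fun_prop)]
  simp_rw [← Finset.prod_pow]
  rw [integral_fintype_prod_eq_prod (fun _ x => x ^ n), Fin.prod_const]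

lemma support_mconvPow {ν : Measure ℝ} [SigmaFinite ν] (hν : IsCompact ν.support) (κ : ℕ) :
    (mconvPow ν κ).support = ν.support ^ κ := by
  have himage : (fun x : Fin κ → ℝ => ∏ i, x i) '' univ.pi (fun _ => ν.support) =
      ν.support ^ κ := by
    rw [image_fintype_prod_pi, Fin.prod_const]
  have hcompact : IsCompact (ν.support ^ κ) :=
    himage ▸ (isCompact_univ_pi fun _ => hν).image (by fun_prop)
  refine Subset.antisymm (support_subset_of_isClosed hcompact.isClosed ?_) ?_
  · rw [mconvPow, mem_ae_map_iff (by fun_prop) hcompact.isClosed.measurableSet, ← himage]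
    filter_upwards [ae_pi_le_pi (pi_mem_pi finite_univ fun _ _ => support_mem_ae)] with x hx
    exact mem_image_of_mem _ hx
  · rw [← himage]
    exact (image_mono (univ_pi_support_subset_support_pi _)).trans
      (image_support_subset_support_map _ (by fun_prop))

lemma Continuous.integrable_of_ae_mem_of_isCompact {X E : Type*} [TopologicalSpace X] [T2Space X]
    [MeasurableSpace X] [OpensMeasurableSpace X] [NormedAddCommGroup E] {μ : Measure X}
    [IsFiniteMeasureOnCompacts μ] {K : Set X} (hK : IsCompact K) (hμK : ∀ᵐ x ∂μ, x ∈ K)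
    {f : X → E} (hf : Continuous f) : Integrable f μ := by
  rw [← restrict_eq_self_of_ae_mem hμK]
  exact hf.continuousOn.integrableOn_compact hK

theorem MeasureTheory.Measure.ext_of_integral_pow_eq {m₁ m₂ : Measure ℝ} [IsFiniteMeasure m₁]
    [IsFiniteMeasure m₂] {a b : ℝ} (h₁ : ∀ᵐ x ∂m₁, x ∈ Icc a b) (h₂ : ∀ᵐ x ∂m₂, x ∈ Icc a b)
    (h : ∀ n : ℕ, ∫ x, x ^ n ∂m₁ = ∫ x, x ^ n ∂m₂) : m₁ = m₂ := by
  have hpoly (P : Polynomial ℝ) : ∫ x, P.eval x ∂m₁ = ∫ x, P.eval x ∂m₂ := by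
    simp only [Polynomial.eval_eq_sum_range]
    rw [integral_finsetSum _ fun k _ =>
        Continuous.integrable_of_ae_mem_of_isCompact isCompact_Icc h₁ (by fun_prop),
      integral_finsetSum _ fun k _ =>
        Continuous.integrable_of_ae_mem_of_isCompact isCompact_Icc h₂ (by fun_prop)]
    simp only [integral_const_mul, h]
  have approx {m : Measure ℝ} [IsFiniteMeasure m] (hm : ∀ᵐ x ∂m, x ∈ Icc a b) (f : ℝ →ᵇ ℝ)
      (P : Polynomial ℝ) (ε : ℝ) (hP : ∀ x ∈ Icc a b, |P.eval x - f x| < ε) :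
      |∫ x, P.eval x ∂m - ∫ x, f x ∂m| ≤ ε * m.real univ := by
    rw [← integral_sub (P.continuous.integrable_of_ae_mem_of_isCompact isCompact_Icc hm)
      (f.continuous.integrable_of_ae_mem_of_isCompact isCompact_Icc hm)]
    simpa only [Real.norm_eq_abs] using
      norm_integral_le_of_norm_le_const (f := fun x => P.eval x - f x) (C := ε)
        (hm.mono fun x hx => (hP x hx).le)
  refine ext_of_forall_integral_eq_of_IsFiniteMeasure fun f => eq_of_forall_dist_le fun δ hδ => ?_
  set C := m₁.real univ + m₂.real univ
  obtain ⟨P, hP⟩ := exists_polynomial_near_of_continuousOn a b f f.continuous.continuousOn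
    (δ / (C + 1)) (by positivity)
  have h₁P := hpoly P ▸ approx h₁ f P _ hP
  calc dist (∫ x, f x ∂m₁) (∫ x, f x ∂m₂)
      ≤ |∫ x, f x ∂m₁ - ∫ x, P.eval x ∂m₂| + |∫ x, P.eval x ∂m₂ - ∫ x, f x ∂m₂| :=
        abs_sub_le _ _ _
    _ ≤ δ / (C + 1) * m₁.real univ + δ / (C + 1) * m₂.real univ :=
        add_le_add (by rwa [abs_sub_comm]) (approx h₂ f P _ hP)
    _ = δ / (C + 1) * C := by ring
    _ ≤ δ := by
        rw [div_mul_eq_mul_div, div_le_iff₀ (by positivity)]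
        nlinarith

lemma support_subset_Iic_of_lintegral_pow_le {ν : Measure ℝ} [IsFiniteMeasure ν] {C R : ℝ}
    (hR : 0 < R) (h : ∀ n : ℕ, ∫⁻ x, ENNReal.ofReal (x ^ n) ∂ν ≤ ENNReal.ofReal (C * R ^ n)) :
    ν.support ⊆ Iic R := by
  intro x hx
  rw [mem_Iic]
  by_contra! hRx
  set y := (R + x) / 2
  have hRy : R < y := by simp only [y]; linarith
  have hyx : y < x := by simp only [y]; linarith
  have hy : 0 < y := hR.trans hRy
  set c := ν.real (Ioi y)
  have hc : 0 < c := ENNReal.toReal_pos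
    ((mem_support_iff_forall x).1 hx _ (Ioi_mem_nhds hyx)).ne' (measure_ne_top _ _)
  have hbound (n : ℕ) : c * y ^ n ≤ C * R ^ n := by
    have hlint : ENNReal.ofReal (c * y ^ n) ≤ ENNReal.ofReal (C * R ^ n) :=
      calc ENNReal.ofReal (c * y ^ n) = ∫⁻ _ in Ioi y, ENNReal.ofReal (y ^ n) ∂ν := by
            rw [setLIntegral_const, ENNReal.ofReal_mul hc.le, ofReal_measureReal, mul_comm]
        _ ≤ ∫⁻ t in Ioi y, ENNReal.ofReal (t ^ n) ∂ν := setLIntegral_mono (by fun_prop)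
            fun t ht => ENNReal.ofReal_le_ofReal (pow_le_pow_left₀ hy.le (le_of_lt ht) n)
        _ ≤ ∫⁻ t, ENNReal.ofReal (t ^ n) ∂ν := setLIntegral_le_lintegral _ _
        _ ≤ _ := h n
    exact (ENNReal.ofReal_le_ofReal_iff'.1 hlint).resolve_right (not_le.2 (by positivity))
  obtain ⟨n, hn⟩ := pow_unbounded_of_one_lt (C / c) ((one_lt_div hR).2 hRy)
  rw [div_pow, lt_div_iff₀ (by positivity), div_mul_eq_mul_div, div_lt_iff₀ hc] at hn
  linarith [hbound n]

lemma pow_subset_Icc_zero_pow {S : Set ℝ} {R : ℝ} (h : S ⊆ Icc 0 R) :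
    ∀ κ : ℕ, S ^ κ ⊆ Icc 0 (R ^ κ)
  | 0 => by simp
  | κ + 1 => by
    rintro _ ⟨x, hx, y, hy, rfl⟩
    obtain ⟨hx0, hxR⟩ := pow_subset_Icc_zero_pow h κ hx
    obtain ⟨hy0, hyR⟩ := h hy
    exact ⟨mul_nonneg hx0 hy0, pow_succ R κ ▸ mul_le_mul hxR hyR hy0 (hx0.trans hxR)⟩

namespace IsRepMeas

variable {a : ℕ → ℝ} {μ : Measure ℝ}

lemma measure_univ (h : IsRepMeas a μ) : μ univ = ENNReal.ofReal (a 0) := by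
  simpa using h.2.2 0

lemma isFiniteMeasure (h : IsRepMeas a μ) : IsFiniteMeasure μ :=
  ⟨h.measure_univ ▸ ENNReal.ofReal_lt_top⟩

lemma support_subset_Ici (h : IsRepMeas a μ) : μ.support ⊆ Ici 0 :=
  support_subset_of_isClosed isClosed_Ici (by simpa [mem_ae_iff] using h.2.1)

lemma ae_nonneg (h : IsRepMeas a μ) : ∀ᵐ x ∂μ, 0 ≤ x :=
  mem_of_superset support_mem_ae h.support_subset_Ici

lemma integral_pow (h : IsRepMeas a μ) (n : ℕ) : ∫ x, x ^ n ∂μ = a n := by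
  rw [integral_eq_lintegral_of_nonneg_ae (h.ae_nonneg.mono fun x hx => pow_nonneg hx n)
    (by fun_prop), h.2.2 n,
    ENNReal.toReal_ofReal (h.1 n)]

lemma le_mul_pow (h : IsRepMeas a μ) {M : ℝ} (hM0 : 0 ≤ M) (hM : μ.support ⊆ Iic M) (n : ℕ) :
    a n ≤ a 0 * M ^ n := by
  have : ENNReal.ofReal (a n) ≤ ENNReal.ofReal (a 0 * M ^ n) :=
    calc ENNReal.ofReal (a n) = ∫⁻ x, ENNReal.ofReal (x ^ n) ∂μ := (h.2.2 n).symm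
      _ ≤ ∫⁻ _, ENNReal.ofReal (M ^ n) ∂μ := lintegral_mono_ae <|
          (h.ae_nonneg.and (mem_of_superset support_mem_ae hM)).mono fun x hx =>
            ENNReal.ofReal_le_ofReal (pow_le_pow_left₀ hx.1 hx.2 n)
      _ = ENNReal.ofReal (a 0 * M ^ n) := by
          rw [lintegral_const, h.measure_univ, ← ENNReal.ofReal_mul' (h.1 0), mul_comm]
  exact (ENNReal.ofReal_le_ofReal_iff (mul_nonneg (h.1 0) (pow_nonneg hM0 n))).1 this

theorem support_eq_support_pow {κ : ℕ} (hκ : κ ≠ 0) {ν : Measure ℝ} (h : IsRepMeas a μ)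
    (hν : IsRepMeas (fun n => a n ^ (κ⁻¹ : ℝ)) ν) (hbdd : BddAbove μ.support) :
    μ.support = ν.support ^ κ := by
  have := h.isFiniteMeasure
  have := hν.isFiniteMeasure
  obtain ⟨M, hM1, hM⟩ := hbdd.exists_ge 1
  have hM0 : 0 < M := zero_lt_one.trans_le hM1
  set R := M ^ (κ⁻¹ : ℝ)
  have hνR : ν.support ⊆ Icc 0 R := by
    refine fun x hx => ⟨hν.support_subset_Ici hx, support_subset_Iic_of_lintegral_pow_le
      (C := a 0 ^ (κ⁻¹ : ℝ)) (by positivity) (fun n => ?_) hx⟩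
    rw [hν.2.2 n, Real.rpow_pow_comm hM0.le, ← Real.mul_rpow (h.1 0) (by positivity)]
    exact ENNReal.ofReal_le_ofReal (Real.rpow_le_rpow (h.1 n) (h.le_mul_pow hM0.le hM n)
      (by positivity))
  have hW : (mconvPow ν κ).support = ν.support ^ κ :=
    support_mconvPow (isCompact_Icc.of_isClosed_subset isClosed_support hνR) κ
  have hWM : ν.support ^ κ ⊆ Icc 0 M :=
    Real.rpow_inv_natCast_pow hM0.le hκ ▸ pow_subset_Icc_zero_pow hνR κ
  have hμW : μ = mconvPow ν κ := by
    refine ext_of_integral_pow_eq (a := 0) (b := M)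
      (mem_of_superset support_mem_ae fun x hx => ⟨h.support_subset_Ici hx, hM x hx⟩)
      (mem_of_superset support_mem_ae (hW ▸ hWM)) fun n => ?_
    rw [h.integral_pow, integral_pow_mconvPow, hν.integral_pow,
      Real.rpow_inv_natCast_pow (h.1 n) hκ]
  rw [hμW, hW]

end IsRepMeas

lemma exists_pow_mul_pow_mem_Ioo {u v a b : ℝ} {κ : ℕ} (hu : 0 < u) (hv : 0 ≤ v) (hab : a < b)
    (hstart : u ^ κ ≤ a) (hend : b ≤ v ^ κ) (hratio : a * v < b * u) :
    ∃ j ≤ κ, u ^ (κ - j) * v ^ j ∈ Ioo a b := by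
  by_contra! hgap
  have hle : ∀ j ≤ κ, u ^ (κ - j) * v ^ j ≤ a := by
    intro j hj
    induction j with
    | zero => simpa using hstart
    | succ j ih =>
      have hstep : u ^ (κ - (j + 1)) * v ^ (j + 1) * u = u ^ (κ - j) * v ^ j * v := by
        rw [show κ - j = κ - (j + 1) + 1 by omega, pow_succ, pow_succ]
        ring
      have hlt : u ^ (κ - (j + 1)) * v ^ (j + 1) < b := by
        refine lt_of_mul_lt_mul_right ?_ hu.le
        rw [hstep]
        linarith [mul_le_mul_of_nonneg_right (ih (by omega)) hv]
      by_contra! hgt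
      exact hgap (j + 1) hj ⟨hgt, hlt⟩
  linarith [show v ^ κ ≤ a by simpa using hle κ le_rfl]

lemma prod_le_mul_pow_card_sub_one {ι : Type*} [Fintype ι] {x : ι → ℝ} {v : ℝ}
    (hx : ∀ i, 0 ≤ x i) (hv : ∀ i, x i ≤ v) (i₀ : ι) :
    ∏ i, x i ≤ x i₀ * v ^ (Fintype.card ι - 1) := by
  classical
  calc ∏ i, x i = x i₀ * ∏ i ∈ Finset.univ.erase i₀, x i :=
        (Finset.mul_prod_erase _ _ (Finset.mem_univ i₀)).symm
    _ ≤ x i₀ * ∏ _ ∈ Finset.univ.erase i₀, v :=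
        mul_le_mul_of_nonneg_left (Finset.prod_le_prod (fun i _ => hx i) fun i _ => hv i) (hx i₀)
    _ = x i₀ * v ^ (Fintype.card ι - 1) := by
        rw [Finset.prod_const, Finset.card_erase_of_mem (Finset.mem_univ i₀), Finset.card_univ]

lemma le_pow_of_forall_pow_mul_pow_mem {T : Set ℝ} {u v θ₁ θ₂ θ₃ : ℝ} {κ : ℕ} (hκ : κ ≠ 0)
    (hu : 0 < u) (huv : u ≤ v) (hθ₁ : 0 ≤ θ₁) (hθ₁₂ : θ₁ < θ₂) (hcond : θ₁ * θ₃ < θ₂ ^ 2)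
    (hgap : Disjoint T (Ioo θ₁ θ₂)) (hbdd : T ⊆ Iic θ₃)
    (hT : ∀ j ≤ κ, u ^ (κ - j) * v ^ j ∈ T) (hθ₂ : θ₂ ≤ u * v ^ (κ - 1)) : θ₂ ≤ u ^ κ := by
  have hv : 0 ≤ v := hu.le.trans huv
  have hθ₂0 : 0 < θ₂ := hθ₁.trans_lt hθ₁₂
  have hκ1 : κ - 1 + 1 = κ := Nat.sub_add_cancel (Nat.pos_of_ne_zero hκ)
  have hvκ : v ^ κ ≤ θ₃ := hbdd (by simpa using hT κ le_rfl)
  have hθ₂v : θ₂ ≤ v ^ κ :=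
    hθ₂.trans (hκ1 ▸ pow_succ' v (κ - 1) ▸ mul_le_mul_of_nonneg_right huv (by positivity))
  have hratio : θ₁ * v < θ₂ * u := by
    have : θ₂ * v ≤ θ₃ * u := by
      calc θ₂ * v ≤ u * v ^ (κ - 1) * v := mul_le_mul_of_nonneg_right hθ₂ hv
        _ = u * v ^ κ := by rw [mul_assoc, ← pow_succ, hκ1]
        _ ≤ θ₃ * u := by rw [mul_comm θ₃]; exact mul_le_mul_of_nonneg_left hvκ hu.le
    refine lt_of_mul_lt_mul_left ?_ hθ₂0.le
    nlinarith [mul_le_mul_of_nonneg_left this hθ₁, mul_lt_mul_of_pos_right hcond hu]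
  by_contra! huκ
  have huκθ₁ : u ^ κ ≤ θ₁ := le_of_not_gt fun h =>
    disjoint_left.1 hgap (by simpa using hT 0 (Nat.zero_le κ)) ⟨h, huκ⟩
  obtain ⟨j, hj, hjI⟩ := exists_pow_mul_pow_mem_Ioo hu hv hθ₁₂ huκθ₁ hθ₂v hratio
  exact disjoint_left.1 hgap (hT j hj) hjI

lemma rpow_inv_mem_of_mem_pow {S : Set ℝ} {κ : ℕ} {θ₁ θ₂ θ₃ : ℝ} (hκ : κ ≠ 0)
    (hS : S ⊆ Ici 0) (hθ₁ : 0 ≤ θ₁) (hθ₁₂ : θ₁ < θ₂) (hcond : θ₁ * θ₃ < θ₂ ^ 2)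
    (hgap : Disjoint (S ^ κ) (Ioo θ₁ θ₂)) (hbdd : S ^ κ ⊆ Iic θ₃) (hθ₂ : θ₂ ∈ S ^ κ) :
    θ₂ ^ (κ⁻¹ : ℝ) ∈ S := by
  obtain ⟨x, hxS, hprod⟩ := mem_pow_iff_prod.1 hθ₂
  have : Nonempty (Fin κ) := ⟨⟨0, Nat.pos_of_ne_zero hκ⟩⟩
  obtain ⟨i₀, -, hmin⟩ := Finset.univ.exists_min_image x Finset.univ_nonempty
  obtain ⟨i₁, -, hmax⟩ := Finset.univ.exists_max_image x Finset.univ_nonempty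
  have hx0 (i : Fin κ) : 0 ≤ x i := hS (hxS i)
  have hu : 0 < x i₀ := (hx0 i₀).lt_of_ne' fun h => (hθ₁.trans_lt hθ₁₂).ne' <|
    hprod ▸ Finset.prod_eq_zero (Finset.mem_univ i₀) h
  have hmem (j : ℕ) (hj : j ≤ κ) : x i₀ ^ (κ - j) * x i₁ ^ j ∈ S ^ κ := by
    have hsplit : S ^ κ = S ^ (κ - j) * S ^ j := by rw [← pow_add, Nat.sub_add_cancel hj]
    exact hsplit ▸ mul_mem_mul (pow_mem_pow (hxS i₀)) (pow_mem_pow (hxS i₁))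
  have hle : x i₀ ^ κ ≤ θ₂ :=
    calc x i₀ ^ κ = ∏ _ : Fin κ, x i₀ := (Fin.prod_const κ _).symm
      _ ≤ ∏ i, x i :=
          Finset.prod_le_prod (fun _ _ => hu.le) fun i _ => hmin i (Finset.mem_univ i)
      _ = θ₂ := hprod
  have hge : θ₂ ≤ x i₀ ^ κ := le_pow_of_forall_pow_mul_pow_mem hκ hu (hmin i₁ (Finset.mem_univ _))
    hθ₁ hθ₁₂ hcond hgap hbdd hmem <| by
      simpa [hprod] using prod_le_mul_pow_card_sub_one hx0 (fun i => hmax i (Finset.mem_univ i)) i₀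
  rw [← le_antisymm hle hge, Real.pow_rpow_inv_natCast hu.le hκ]
  exact hxS i₀

lemma mul_lt_sq_of_floor_log_div_log_eq_zero {θ₁ θ₂ θ₃ : ℝ} (hθ₁ : 0 < θ₁) (hθ₁₂ : θ₁ < θ₂)
    (hθ₃ : 0 < θ₃) (h : ⌊Real.log (θ₃ / θ₂) / Real.log (θ₂ / θ₁)⌋ = 0) : θ₁ * θ₃ < θ₂ ^ 2 := by
  have hθ₂ : 0 < θ₂ := hθ₁.trans hθ₁₂
  have hlog := (div_lt_one (Real.log_pos ((one_lt_div hθ₁).2 hθ₁₂))).1 (Int.floor_eq_zero_iff.1 h).2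
  have hdiv := (Real.log_lt_log_iff (by positivity) (by positivity)).1 hlog
  rw [div_lt_div_iff₀ hθ₂ hθ₁] at hdiv
  nlinarith

theorem stmt16 (a : ℕ → ℝ) (μ : Measure ℝ)
    (hμ : IsRepMeas a μ)
    (θ1 θ2 θ3 : ℝ) (h1 : 0 < θ1) (h12 : θ1 < θ2) (h23 : θ2 < θ3)
    (hθ3 : IsLUB (msupport μ) θ3)
    (hhole : μ (Set.Ioo θ1 θ2) = 0)
    (J : Set ℕ)
    (hJ : J = {κ : ℕ | 2 ≤ κ ∧ IsStieltjes (fun n => a n ^ (1 / (κ : ℝ)))})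
    (hJne : J.Nonempty)
    (ν : ℕ → Measure ℝ)
    (hν : ∀ κ ∈ J, IsRepMeas (fun n => a n ^ (1 / (κ : ℝ))) (ν κ))
    (hιss : (1 + ⌊Real.log (θ3 / θ2) / Real.log (θ2 / θ1)⌋ : ℤ) = 1) :
    (θ2 ∈ msupport μ ↔ ∃ κ ∈ J, θ2 ^ (1 / (κ : ℝ)) ∈ msupport (ν κ)) ∧
    (θ2 ∈ msupport μ ↔ ∀ κ ∈ J, θ2 ^ (1 / (κ : ℝ)) ∈ msupport (ν κ)) := by
  simp only [msupport_eq_support, one_div] at hθ3 hν ⊢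
  have hcond : θ1 * θ3 < θ2 ^ 2 :=
    mul_lt_sq_of_floor_log_div_log_eq_zero h1 h12 (h1.trans (h12.trans h23)) (by omega)
  have hgap : Disjoint μ.support (Ioo θ1 θ2) :=
    subset_compl_iff_disjoint_left.1 (subset_compl_support_of_isOpen isOpen_Ioo hhole)
  have key : ∀ κ ∈ J, (θ2 ∈ μ.support ↔ θ2 ^ (κ⁻¹ : ℝ) ∈ (ν κ).support) := by
    intro κ hκ
    have hκ0 : κ ≠ 0 := by rw [hJ] at hκ; exact (lt_of_lt_of_le two_pos hκ.1).ne'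
    have hsupp := hμ.support_eq_support_pow hκ0 (hν κ hκ) ⟨θ3, hθ3.1⟩
    rw [hsupp] at hgap hθ3 ⊢
    refine ⟨rpow_inv_mem_of_mem_pow hκ0 (hν κ hκ).support_subset_Ici h1.le h12 hcond hgap
      hθ3.1, fun h => ?_⟩
    simpa [Real.rpow_inv_natCast_pow (h1.trans h12).le hκ0] using pow_mem_pow h (n := κ)
  obtain ⟨κ₀, hκ₀⟩ := hJne
  exact ⟨⟨fun h => ⟨κ₀, hκ₀, (key κ₀ hκ₀).1 h⟩, fun ⟨κ, hκ, h⟩ => (key κ hκ).2 h⟩,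
    ⟨fun h κ hκ => (key κ hκ).1 h, fun h => (key κ₀ hκ₀).2 (h κ₀ hκ₀)⟩⟩
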